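/- arXiv:math/0701476 — 3 statements merged into one kernel-verified Lean document; each statement's English description precedes it below -/
import Mathlib

section
/- If $N$ is a Nijenhuis operator on a Lie algebra $g$, then for every natural number $k \geq 1$, $N^k$ is also a Nijenhuis operator, i.e. $N^k([X,Y]_{N^k}) = [N^k X, N^k Y]$ for all $X, Y \in g$, where $[X,Y]_{N^k} := [N^k X, Y] + [X, N^k Y] - N^k[X,Y]$. -/
lemma nijenhuis_pw {R : Type*} [CommRing R] {g : Type*}
    [LieRing g] [LieAlgebra R g] (N : Module.End R g) (n : ℕ) (z : g) :
    N ((N ^ n) z) = (N ^ (n + 1)) z := by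
  rw [pow_succ', Module.End.mul_apply]

lemma nijenhuis_one_q {R : Type*} [CommRing R] {g : Type*}
    [LieRing g] [LieAlgebra R g] (N : Module.End R g)
    (hN : ∀ X Y : g, N (⁅N X, Y⁆ + ⁅X, N Y⁆ - N ⁅X, Y⁆) = ⁅N X, N Y⁆) :
    ∀ (q : ℕ) (X Y : g),
      ⁅N X, (N ^ q) Y⁆ = (N ^ q) ⁅N X, Y⁆ + N ⁅X, (N ^ q) Y⁆
        - (N ^ (q + 1)) ⁅X, Y⁆ := by
  intro q
  induction q with
  | zero => intro X Y; simp
  | succ q ih =>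
    intro X Y
    have h1 := hN X ((N ^ q) Y)
    rw [ih X Y] at h1
    rw [← nijenhuis_pw N q Y, ← h1]
    simp only [map_add, map_sub, nijenhuis_pw]
    abel

lemma nijenhuis_key {R : Type*} [CommRing R] {g : Type*}
    [LieRing g] [LieAlgebra R g] (N : Module.End R g)
    (hN : ∀ X Y : g, N (⁅N X, Y⁆ + ⁅X, N Y⁆ - N ⁅X, Y⁆) = ⁅N X, N Y⁆) :
    ∀ (p q : ℕ) (X Y : g),
      ⁅(N ^ p) X, (N ^ q) Y⁆ = (N ^ q) ⁅(N ^ p) X, Y⁆ + (N ^ p) ⁅X, (N ^ q) Y⁆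
        - (N ^ (p + q)) ⁅X, Y⁆ := by
  intro p
  induction p with
  | zero => intro q X Y; simp
  | succ p ih =>
    intro q X Y
    rw [← nijenhuis_pw N p X,
      nijenhuis_one_q N hN q ((N ^ p) X) Y, ih q X Y]
    simp only [map_add, map_sub, nijenhuis_pw]
    abel

/-- If `N` is a Nijenhuis operator on a Lie algebra `g`, then so is every power
`N^k` for `k ≥ 1`:  `N^k([X,Y]_{N^k}) = [N^k X, N^k Y]`, where
`[X,Y]_{N^k} := [N^k X, Y] + [X, N^k Y] - N^k [X,Y]`. -/
theorem nijenhuis_pow {R : Type*} [CommRing R] {g : Type*}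
    [LieRing g] [LieAlgebra R g] (N : Module.End R g)
    (hN : ∀ X Y : g, N (⁅N X, Y⁆ + ⁅X, N Y⁆ - N ⁅X, Y⁆) = ⁅N X, N Y⁆) :
    ∀ (k : ℕ), 1 ≤ k → ∀ X Y : g,
      (N ^ k) (⁅(N ^ k) X, Y⁆ + ⁅X, (N ^ k) Y⁆ - (N ^ k) ⁅X, Y⁆)
        = ⁅(N ^ k) X, (N ^ k) Y⁆ := by
  intro k _ X Y
  rw [nijenhuis_key N hN k k X Y]
  simp only [map_add, map_sub, ← Module.End.mul_apply, ← pow_add]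
end

section
/- Let $C$ be a commutative ring with a sequence of Poisson brackets $\{\cdot,\cdot\}_k$ ($k \in \mathbb{N}$) and functions $h_i$ ($i \in \mathbb{N}$) satisfying $\{h_i, f\}_{k+1} = \{h_{i+1}, f\}_k$ for all $f \in C$ and all $i, k$. Then the $h_i$ are in involution with respect to every bracket: $\{h_i, h_j\}_k = 0$ for all $i, j, k$. -/
/-- Multi-Hamiltonian hierarchy: given a sequence of Poisson brackets `b k` on a
commutative ring `C` and functions `h i` satisfying the shift relation
`{h i, f}_{k+1} = {h (i+1), f}_k` for all `f, i, k`, the functions `h i` are in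
involution with respect to every bracket: `{h i, h j}_k = 0`. -/
theorem hierarchy_involution {C : Type*} [CommRing C]
    (b : ℕ → C → C → C)
    (hskew : ∀ k, ∀ f g : C, b k f g = - b k g f)
    (halt : ∀ k, ∀ f : C, b k f f = 0)
    (hleib : ∀ k, ∀ f g x : C, b k (f * g) x = f * b k g x + g * b k f x)
    (hadd : ∀ k, ∀ f g x : C, b k (f + g) x = b k f x + b k g x)
    (hjac : ∀ k, ∀ f g x : C,
      b k (b k f g) x + b k (b k g x) f + b k (b k x f) g = 0)
    (h : ℕ → C)
    (hshift : ∀ i k : ℕ, ∀ f : C, b (k + 1) (h i) f = b k (h (i + 1)) f) :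
    ∀ i j k : ℕ, b k (h i) (h j) = 0 := by
  have key : ∀ d i k : ℕ, b k (h i) (h (i + d)) = 0 := by
    intro d
    induction d with
    | zero => intro i k; simpa using halt k (h i)
    | succ d ih =>
        intro i k
        have h1 : b k (h i) (h (i + (d + 1))) = b (k + 1) (h i) (h (i + d)) := by
          have : i + (d + 1) = (i + d) + 1 := by omega
          rw [this, hskew k, ← hshift (i + d) k (h i), ← hskew (k + 1)]
        rw [h1, ih i (k + 1)]
  intro i j k
  rcases le_or_gt i j with hij | hij
  · obtain ⟨d, rfl⟩ := Nat.exists_eq_add_of_le hij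
    exact key d i k
  · obtain ⟨d, rfl⟩ := Nat.exists_eq_add_of_le hij.le
    rw [hskew, key d j k, neg_zero]
end

section
/- On $\mathbb{R}^{2n}$ with coordinates $(q_1,\dots,q_n,p_1,\dots,p_n)$, the bivector $\widetilde{\pi}_1$ determined by $\{q_i,q_j\}_1 = -1$ for $i<j$, $\{q_i,p_j\}_1 = p_i\delta_{ij}$, $\{p_j,p_i\}_1 = e^{q_i - q_{i+1}}\delta_{j,i+1}$ (for $i<j$ in the last relation, all other brackets of coordinates determined by antisymmetry) defines a Poisson bracket, i.e. the bracket $\{f,g\}_1 = \sum \pi_1^{ab} \partial_a f \partial_b g$ satisfies the Jacobi identity. -/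
open scoped BigOperators

set_option maxHeartbeats 1000000

/-- Phase space `ℝ^{2n}` with coordinates `(q, p)`. -/
abbrev TodaPt (n : ℕ) := (Fin n → ℝ) × (Fin n → ℝ)

/-- Partial derivative with respect to `q i`. -/
noncomputable def dq {n : ℕ} (f : TodaPt n → ℝ) (i : Fin n) (z : TodaPt n) : ℝ :=
  fderiv ℝ f z (Pi.single i 1, 0)

/-- Partial derivative with respect to `p i`. -/
noncomputable def dp {n : ℕ} (f : TodaPt n → ℝ) (i : Fin n) (z : TodaPt n) : ℝ :=
  fderiv ℝ f z (0, Pi.single i 1)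

/-- The second Toda bracket on `ℝ^{2n}` in physical coordinates, determined by
`{q i, q j}₁ = -1` for `i < j`, `{q i, p i}₁ = p i`, and
`{p (i+1), p i}₁ = exp (q i - q (i+1))`. -/
noncomputable def todaBr1 {n : ℕ} (f g : TodaPt n → ℝ) (z : TodaPt n) : ℝ :=
  (∑ i : Fin n, ∑ j : Fin n, if i < j then
      (-1 : ℝ) * (dq f i z * dq g j z - dq g i z * dq f j z) else 0)
  + (∑ i : Fin n, z.2 i * (dq f i z * dp g i z - dq g i z * dp f i z))
  + (∑ i : Fin n, ∑ j : Fin n, if (j : ℕ) = (i : ℕ) + 1 then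
      Real.exp (z.1 i - z.1 j) * (dp f j z * dp g i z - dp g j z * dp f i z) else 0)

/-! ### Auxiliary general algebra: quadruple sums -/

section Key
variable {ι : Type*} [Fintype ι] [DecidableEq ι]

/-- flattened quadruple sum -/
noncomputable def T4 (t : ι → ι → ι → ι → ℝ) : ℝ :=
  ∑ x : ι × ι × ι × ι, t x.1 x.2.1 x.2.2.1 x.2.2.2

lemma T4_flat (t : ι → ι → ι → ι → ℝ) :
    T4 t = ∑ c, ∑ d, ∑ a, ∑ b, t c d a b := by
  simp [T4, Fintype.sum_prod_type]

lemma T4_reindex (t : ι → ι → ι → ι → ℝ) (σ : (ι × ι × ι × ι) ≃ (ι × ι × ι × ι)) :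
    T4 t = ∑ x : ι × ι × ι × ι,
      t (σ x).1 (σ x).2.1 (σ x).2.2.1 (σ x).2.2.2 :=
  (Equiv.sum_comp σ fun x => t x.1 x.2.1 x.2.2.1 x.2.2.2).symm

variable (P : ι → ι → ℝ) (dP : ι → ι → ι → ℝ)

lemma keyPair (hP : ∀ a b, P b a = - P a b) (YY : ι → ι → ℝ)
    (hYY : ∀ a b, YY a b = YY b a) (X Z : ι → ℝ) :
    T4 (fun c d a b => P c d * P a b * X a * YY b c * Z d)
      + T4 (fun c d a b => P c d * P a b * YY a c * Z b * X d) = 0 := by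
  -- reindex the second sum by σ : (c,d,a,b) ↦ (c,a,b,d)
  have hσ : T4 (fun c d a b => P c d * P a b * YY a c * Z b * X d)
      = ∑ x : ι × ι × ι × ι, (fun c d a b => P c a * P b d * YY b c * Z d * X a)
          x.1 x.2.1 x.2.2.1 x.2.2.2 := by
    rw [T4_reindex _ ⟨fun x => (x.1, x.2.2.1, x.2.2.2, x.2.1),
      fun x => (x.1, x.2.2.2, x.2.1, x.2.2.1), fun x => rfl, fun x => rfl⟩]
    rfl
  set g : ι × ι × ι × ι → ℝ := fun x =>
    P x.1 x.2.1 * P x.2.2.1 x.2.2.2 * X x.2.2.1 * YY x.2.2.2 x.1 * Z x.2.1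
    + P x.1 x.2.2.1 * P x.2.2.2 x.2.1 * YY x.2.2.2 x.1 * Z x.2.1 * X x.2.2.1 with hg
  have hsum : T4 (fun c d a b => P c d * P a b * X a * YY b c * Z d)
      + T4 (fun c d a b => P c d * P a b * YY a c * Z b * X d) = ∑ x, g x := by
    rw [hσ]; unfold T4
    rw [← Finset.sum_add_distrib]
  -- involution τ swapping slots 1 and 4
  have hτ : ∑ x, g x = ∑ x, g ((⟨fun x => (x.2.2.2, x.2.1, x.2.2.1, x.1),
      fun x => (x.2.2.2, x.2.1, x.2.2.1, x.1), fun x => rfl, fun x => rfl⟩ :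
      (ι × ι × ι × ι) ≃ (ι × ι × ι × ι)) x) :=
    (Equiv.sum_comp _ g).symm
  have hneg : ∀ x : ι × ι × ι × ι, g ((x.2.2.2, x.2.1, x.2.2.1, x.1) : ι × ι × ι × ι) = - g x := by
    rintro ⟨c, d, a, b⟩
    simp only [hg]
    rw [hYY c b, hP c a, hP a b]
    ring
  have : ∑ x, g x = - ∑ x, g x := by
    nth_rewrite 1 [hτ]
    rw [← Finset.sum_neg_distrib]
    exact Finset.sum_congr rfl fun x _ => hneg x
  rw [hsum]; linarith

lemma keySch (hP : ∀ a b, P b a = - P a b)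
    (hS : ∀ a b c, ∑ d, (P a d * dP b c d + P b d * dP c a d + P c d * dP a b d) = 0)
    (F G H : ι → ℝ) :
    T4 (fun c d a b => P c d * dP a b c * F a * G b * H d)
    + T4 (fun c d a b => P c d * dP a b c * G a * H b * F d)
    + T4 (fun c d a b => P c d * dP a b c * H a * F b * G d) = 0 := by
  have h1 : T4 (fun c d a b => P c d * dP a b c * F a * G b * H d)
      = T4 (fun c d a b => P d c * dP a b d * F a * G b * H c) := by
    rw [T4_reindex _ ⟨fun x => (x.2.1, x.1, x.2.2.1, x.2.2.2),
      fun x => (x.2.1, x.1, x.2.2.1, x.2.2.2), fun x => rfl, fun x => rfl⟩]; rfl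
  have h2 : T4 (fun c d a b => P c d * dP a b c * G a * H b * F d)
      = T4 (fun c d a b => P d a * dP b c d * G b * H c * F a) := by
    rw [T4_reindex _ ⟨fun x => (x.2.1, x.2.2.1, x.2.2.2, x.1),
      fun x => (x.2.2.2, x.1, x.2.1, x.2.2.1), fun x => rfl, fun x => rfl⟩]; rfl
  have h3 : T4 (fun c d a b => P c d * dP a b c * H a * F b * G d)
      = T4 (fun c d a b => P d b * dP c a d * H c * F a * G b) := by
    rw [T4_reindex _ ⟨fun x => (x.2.1, x.2.2.2, x.1, x.2.2.1),
      fun x => (x.2.2.1, x.1, x.2.2.2, x.2.1), fun x => rfl, fun x => rfl⟩]; rfl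
  rw [h1, h2, h3]
  unfold T4
  rw [← Finset.sum_add_distrib, ← Finset.sum_add_distrib]
  have : ∀ x : ι × ι × ι × ι,
      (fun c d a b => P d c * dP a b d * F a * G b * H c) x.1 x.2.1 x.2.2.1 x.2.2.2
      + (fun c d a b => P d a * dP b c d * G b * H c * F a) x.1 x.2.1 x.2.2.1 x.2.2.2
      + (fun c d a b => P d b * dP c a d * H c * F a * G b) x.1 x.2.1 x.2.2.1 x.2.2.2
      = (fun c d a b => -(F a * G b * H c) *
          (P a d * dP b c d + P b d * dP c a d + P c d * dP a b d))
          x.1 x.2.1 x.2.2.1 x.2.2.2 := by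
    rintro ⟨c, d, a, b⟩
    simp only
    rw [hP c d, hP a d, hP b d]
    ring
  rw [Finset.sum_congr rfl fun x _ => this x]
  rw [show (∑ x : ι × ι × ι × ι, (fun c d a b => -(F a * G b * H c) *
      (P a d * dP b c d + P b d * dP c a d + P c d * dP a b d))
      x.1 x.2.1 x.2.2.1 x.2.2.2)
    = ∑ c, ∑ d, ∑ a, ∑ b, -(F a * G b * H c) *
      (P a d * dP b c d + P b d * dP c a d + P c d * dP a b d) from
    by simp [Fintype.sum_prod_type]]
  have inner : ∀ c a b : ι, ∑ d, -(F a * G b * H c) *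
      (P a d * dP b c d + P b d * dP c a d + P c d * dP a b d) = 0 := by
    intro c a b
    rw [← Finset.mul_sum, hS a b c, mul_zero]
  calc ∑ c, ∑ d, ∑ a, ∑ b, -(F a * G b * H c) *
        (P a d * dP b c d + P b d * dP c a d + P c d * dP a b d)
      = ∑ c, ∑ a, ∑ b, ∑ d, -(F a * G b * H c) *
        (P a d * dP b c d + P b d * dP c a d + P c d * dP a b d) := by
        refine Finset.sum_congr rfl fun c _ => ?_
        rw [Finset.sum_comm]
        exact Finset.sum_congr rfl fun a _ => Finset.sum_comm
    _ = 0 := by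
        refine Finset.sum_eq_zero fun c _ => Finset.sum_eq_zero fun a _ =>
          Finset.sum_eq_zero fun b _ => inner c a b

lemma key (F G H : ι → ℝ) (FF GG HH : ι → ι → ℝ)
    (hP : ∀ a b, P b a = - P a b)
    (hFF : ∀ a b, FF a b = FF b a) (hGG : ∀ a b, GG a b = GG b a)
    (hHH : ∀ a b, HH a b = HH b a)
    (hS : ∀ a b c, ∑ d, (P a d * dP b c d + P b d * dP c a d + P c d * dP a b d) = 0) :
    (∑ c, ∑ d, P c d * (∑ a, ∑ b, (dP a b c * F a * G b + P a b * FF a c * G b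
        + P a b * F a * GG b c)) * H d)
    + (∑ c, ∑ d, P c d * (∑ a, ∑ b, (dP a b c * G a * H b + P a b * GG a c * H b
        + P a b * G a * HH b c)) * F d)
    + (∑ c, ∑ d, P c d * (∑ a, ∑ b, (dP a b c * H a * F b + P a b * HH a c * F b
        + P a b * H a * FF b c)) * G d) = 0 := by
  have expand : ∀ (X Y Z : ι → ℝ) (XX YY : ι → ι → ℝ),
      (∑ c, ∑ d, P c d * (∑ a, ∑ b, (dP a b c * X a * Y b + P a b * XX a c * Y b
          + P a b * X a * YY b c)) * Z d)
      = T4 (fun c d a b => P c d * dP a b c * X a * Y b * Z d)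
        + T4 (fun c d a b => P c d * P a b * XX a c * Y b * Z d)
        + T4 (fun c d a b => P c d * P a b * X a * YY b c * Z d) := by
    intro X Y Z XX YY
    rw [T4_flat, T4_flat, T4_flat, ← Finset.sum_add_distrib, ← Finset.sum_add_distrib]
    refine Finset.sum_congr rfl fun c _ => ?_
    rw [← Finset.sum_add_distrib, ← Finset.sum_add_distrib]
    refine Finset.sum_congr rfl fun d _ => ?_
    rw [← Finset.sum_add_distrib, ← Finset.sum_add_distrib]
    rw [Finset.mul_sum, Finset.sum_mul]
    refine Finset.sum_congr rfl fun a _ => ?_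
    rw [Finset.mul_sum, Finset.sum_mul, ← Finset.sum_add_distrib, ← Finset.sum_add_distrib]
    exact Finset.sum_congr rfl fun b _ => by ring
  rw [expand F G H FF GG, expand G H F GG HH, expand H F G HH FF]
  have hA := keyPair P hP FF hFF H G
  have hB := keyPair P hP GG hGG F H
  have hC := keyPair P hP HH hHH G F
  have hD := keySch P dP hP hS F G H
  linarith
end Key

/-! ### The Toda bivector and its derivatives -/

section Toda
variable {n : ℕ}

abbrev Idx (n : ℕ) := Fin n ⊕ Fin n

noncomputable def ee (a : Idx n) : TodaPt n :=
  Sum.elim (fun i => (Pi.single i 1, 0)) (fun i => ((0 : Fin n → ℝ), Pi.single i 1)) a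

/-- Directional derivative along the coordinate direction `a`. -/
noncomputable def D (f : TodaPt n → ℝ) (a : Idx n) (z : TodaPt n) : ℝ :=
  fderiv ℝ f z (ee a)

lemma D_inl (f : TodaPt n → ℝ) (i : Fin n) : D f (Sum.inl i) = dq f i := rfl
lemma D_inr (f : TodaPt n → ℝ) (i : Fin n) : D f (Sum.inr i) = dp f i := rfl

lemma contDiff_D {f : TodaPt n → ℝ} (hf : ContDiff ℝ (⊤ : ℕ∞) f) (a : Idx n) :
    ContDiff ℝ (⊤ : ℕ∞) (D f a) :=
  (hf.fderiv_right (by simp)).clm_apply contDiff_const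

lemma D_mul {u v : TodaPt n → ℝ} {z : TodaPt n} (hu : DifferentiableAt ℝ u z)
    (hv : DifferentiableAt ℝ v z) (a : Idx n) :
    D (fun w => u w * v w) a z = D u a z * v z + u z * D v a z := by
  unfold D
  rw [fderiv_fun_mul hu hv]
  simp; ring

lemma D_sum {α : Type*} (s : Finset α) (F : α → TodaPt n → ℝ) {z : TodaPt n}
    (hF : ∀ i ∈ s, DifferentiableAt ℝ (F i) z) (a : Idx n) :
    D (fun w => ∑ i ∈ s, F i w) a z = ∑ i ∈ s, D (F i) a z := by
  unfold D
  rw [fderiv_fun_sum hF]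
  simp

lemma D_D_symm {f : TodaPt n → ℝ} (hf : ContDiff ℝ (⊤ : ℕ∞) f) (a b : Idx n) (z : TodaPt n) :
    D (D f a) b z = D (D f b) a z := by
  have hsym : IsSymmSndFDerivAt ℝ f z :=
    hf.contDiffAt.isSymmSndFDerivAt (by rw [minSmoothness_of_isRCLikeNormedField]; exact WithTop.coe_le_coe.2 (le_top : (2 : ℕ∞) ≤ ⊤))
  have hd : DifferentiableAt ℝ (fderiv ℝ f) z :=
    ((hf.fderiv_right (m := (⊤ : ℕ∞)) (by simp)).differentiable (by simp)).differentiableAt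
  have key : ∀ c d : Idx n, D (D f c) d z = fderiv ℝ (fderiv ℝ f) z (ee d) (ee c) := by
    intro c d
    have : D f c = fun w => (fderiv ℝ f w) (ee c) := rfl
    rw [this]
    show fderiv ℝ (fun w => (fderiv ℝ f w) (ee c)) z (ee d) = _
    rw [fderiv_clm_apply hd (differentiableAt_const _)]
    simp
  rw [key, key, hsym]

/-- coordinate `q i` as a continuous linear map -/
noncomputable def cq (i : Fin n) : TodaPt n →L[ℝ] ℝ :=
  (ContinuousLinearMap.proj i).comp (ContinuousLinearMap.fst ℝ (Fin n → ℝ) (Fin n → ℝ))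
noncomputable def cp (i : Fin n) : TodaPt n →L[ℝ] ℝ :=
  (ContinuousLinearMap.proj i).comp (ContinuousLinearMap.snd ℝ (Fin n → ℝ) (Fin n → ℝ))

lemma cq_ee (i : Fin n) (d : Idx n) : cq i (ee d) = if d = Sum.inl i then 1 else 0 := by
  rcases d with k | k <;>
    simp [cq, ee, Pi.single_apply, eq_comm]

lemma cp_ee (i : Fin n) (d : Idx n) : cp i (ee d) = if d = Sum.inr i then 1 else 0 := by
  rcases d with k | k <;>
    simp [cp, ee, Pi.single_apply, eq_comm]

lemma D_q (i : Fin n) (d : Idx n) (z : TodaPt n) :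
    D (fun z : TodaPt n => z.1 i) d z = if d = Sum.inl i then 1 else 0 := by
  unfold D
  rw [show (fun z : TodaPt n => z.1 i) = ⇑(cq i) from rfl, (cq i).fderiv]
  exact cq_ee i d

lemma D_p (i : Fin n) (d : Idx n) (z : TodaPt n) :
    D (fun z : TodaPt n => z.2 i) d z = if d = Sum.inr i then 1 else 0 := by
  unfold D
  rw [show (fun z : TodaPt n => z.2 i) = ⇑(cp i) from rfl, (cp i).fderiv]
  exact cp_ee i d

lemma contDiff_q (i : Fin n) : ContDiff ℝ (⊤ : ℕ∞) (fun z : TodaPt n => z.1 i) := (cq i).contDiff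
lemma contDiff_p (i : Fin n) : ContDiff ℝ (⊤ : ℕ∞) (fun z : TodaPt n => z.2 i) := (cp i).contDiff
lemma contDiff_eqq (i j : Fin n) :
    ContDiff ℝ (⊤ : ℕ∞) (fun z : TodaPt n => Real.exp (z.1 i - z.1 j)) :=
  ((contDiff_q i).sub (contDiff_q j)).exp

lemma D_eqq (i j : Fin n) (d : Idx n) (z : TodaPt n) :
    D (fun z : TodaPt n => Real.exp (z.1 i - z.1 j)) d z
      = Real.exp (z.1 i - z.1 j) *
        ((if d = Sum.inl i then 1 else 0) - (if d = Sum.inl j then 1 else 0)) := by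
  unfold D
  have hdiff : DifferentiableAt ℝ (fun z : TodaPt n => z.1 i - z.1 j) z :=
    (((contDiff_q i).sub (contDiff_q j)).differentiable (by simp)).differentiableAt
  rw [fderiv_exp hdiff]
  have h2 : fderiv ℝ (fun z : TodaPt n => z.1 i - z.1 j) z (ee d)
      = (if d = Sum.inl i then 1 else 0) - (if d = Sum.inl j then 1 else 0) := by
    rw [fderiv_fun_sub (((contDiff_q i).differentiable (by simp)).differentiableAt)
      (((contDiff_q j).differentiable (by simp)).differentiableAt)]
    rw [ContinuousLinearMap.sub_apply]
    have e1 := D_q i d z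
    have e2 := D_q j d z
    unfold D at e1 e2
    rw [e1, e2]
  simp [h2]

/-- The Toda bivector. -/
noncomputable def PP : Idx n → Idx n → TodaPt n → ℝ
  | .inl i, .inl j => fun _ => if i < j then -1 else if j < i then 1 else 0
  | .inl i, .inr j => fun z => if i = j then z.2 i else 0
  | .inr i, .inl j => fun z => if i = j then -z.2 i else 0
  | .inr i, .inr j => fun z =>
      (if (i:ℕ) = (j:ℕ)+1 then Real.exp (z.1 j - z.1 i) else 0)
      - (if (j:ℕ) = (i:ℕ)+1 then Real.exp (z.1 i - z.1 j) else 0)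

/-- Explicit derivative of the bivector. -/
noncomputable def DPi : Idx n → Idx n → Idx n → TodaPt n → ℝ
  | .inl _, .inl _ => fun _ _ => 0
  | .inl i, .inr j => fun d _ => if i = j ∧ d = Sum.inr i then 1 else 0
  | .inr i, .inl j => fun d _ => if i = j ∧ d = Sum.inr i then -1 else 0
  | .inr i, .inr j => fun d z =>
      (if (i:ℕ) = (j:ℕ)+1 then Real.exp (z.1 j - z.1 i) *
          ((if d = Sum.inl j then 1 else 0) - (if d = Sum.inl i then 1 else 0)) else 0)
      - (if (j:ℕ) = (i:ℕ)+1 then Real.exp (z.1 i - z.1 j) *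
          ((if d = Sum.inl i then 1 else 0) - (if d = Sum.inl j then 1 else 0)) else 0)

lemma PP_antisymm (a b : Idx n) (z : TodaPt n) : PP b a z = - PP a b z := by
  rcases a with i | i <;> rcases b with j | j <;> simp only [PP]
  · rcases lt_trichotomy i j with h | h | h
    · simp [h, not_lt.2 h.le, h.ne']
    · simp [h]
    · simp [h, not_lt.2 h.le, h.ne']
  · by_cases h : i = j
    · subst h; simp
    · simp [h, Ne.symm h]
  · by_cases h : i = j
    · subst h; simp
    · simp [h, Ne.symm h]
  · ring

lemma contDiff_PP (a b : Idx n) : ContDiff ℝ (⊤ : ℕ∞) (PP a b) := by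
  rcases a with i | i <;> rcases b with j | j <;> simp only [PP]
  · split_ifs <;> exact contDiff_const
  · split_ifs <;> [exact contDiff_p i; exact contDiff_const]
  · split_ifs <;> [exact (contDiff_p i).neg; exact contDiff_const]
  · apply ContDiff.sub <;> split_ifs <;>
      first
        | exact contDiff_eqq _ _
        | exact contDiff_const

lemma D_const (c : ℝ) (d : Idx n) (z : TodaPt n) : D (fun _ : TodaPt n => c) d z = 0 := by
  unfold D; rw [fderiv_fun_const]; simp

lemma D_PP (a b : Idx n) (d : Idx n) (z : TodaPt n) : D (PP a b) d z = DPi a b d z := by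
  rcases a with i | i <;> rcases b with j | j <;> simp only [PP, DPi]
  · split_ifs <;> exact D_const _ d z
  · by_cases hij : i = j
    · subst hij
      simp only [eq_self_iff_true, if_true, true_and]
      rw [D_p]
    · simp only [if_neg hij, hij, false_and, if_false]
      exact D_const _ d z
  · by_cases hij : i = j
    · subst hij
      simp only [eq_self_iff_true, if_true, true_and]
      rw [show (fun z : TodaPt n => -z.2 i) = (fun z : TodaPt n => (0:ℝ) - z.2 i) from
        funext fun z => by ring]
      unfold D
      rw [fderiv_fun_sub (differentiableAt_const 0)
        (((contDiff_p i).differentiable (by simp)).differentiableAt)]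
      rw [ContinuousLinearMap.sub_apply]
      have e := D_p i d z; unfold D at e
      rw [fderiv_fun_const, e]
      simp [apply_ite]
    · simp only [if_neg hij, hij, false_and, if_false]
      exact D_const _ d z
  · by_cases h1 : (i:ℕ) = (j:ℕ)+1 <;> by_cases h2 : (j:ℕ) = (i:ℕ)+1
    · omega
    · simp only [if_pos h1, if_neg h2, sub_zero]
      rw [D_eqq]
    · simp only [if_neg h1, if_pos h2, zero_sub]
      rw [show (fun z : TodaPt n => -Real.exp (z.1 i - z.1 j))
          = (fun z : TodaPt n => (0:ℝ) - Real.exp (z.1 i - z.1 j)) from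
        funext fun z => by ring]
      unfold D
      rw [fderiv_fun_sub (differentiableAt_const 0)
        (((contDiff_eqq i j).differentiable (by simp)).differentiableAt)]
      rw [ContinuousLinearMap.sub_apply]
      have e := D_eqq i j d z; unfold D at e
      rw [fderiv_fun_const, e]
      simp
    · simp only [if_neg h1, if_neg h2, sub_zero]
      exact D_const _ d z

/-! ### The Schouten identity for the Toda bivector -/

lemma sum_guard (P : Prop) [Decidable P] (v : Fin n) (c : Fin n → ℝ) :
    ∑ x : Fin n, (if P ∧ x = v then c x else 0) = if P then c v else 0 := by
  by_cases hP : P <;> simp [hP, Finset.sum_ite_eq']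

lemma sum_guard2 (Q : Prop) [Decidable Q] (v w : Fin n) (c : Fin n → ℝ) :
    ∑ x : Fin n, (if Q then (if x = v then c x else 0) - (if x = w then c x else 0) else 0)
      = if Q then c v - c w else 0 := by
  by_cases hQ : Q <;> simp [hQ, Finset.sum_sub_distrib, Finset.sum_ite_eq']

noncomputable def SJ (a b c : Idx n) (z : TodaPt n) : ℝ :=
  ∑ d : Idx n, (PP a d z * DPi b c d z + PP b d z * DPi c a d z
      + PP c d z * DPi a b d z)

lemma SJ_cyc (a b c : Idx n) (z : TodaPt n) : SJ a b c z = SJ b c a z := by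
  unfold SJ; exact Finset.sum_congr rfl fun d _ => by ring

lemma SJ_lll (i j k : Fin n) (z : TodaPt n) : SJ (Sum.inl i) (Sum.inl j) (Sum.inl k) z = 0 := by
  unfold SJ; simp [DPi]

lemma SJ_llr (i j k : Fin n) (z : TodaPt n) : SJ (Sum.inl i) (Sum.inl j) (Sum.inr k) z = 0 := by
  unfold SJ
  simp only [DPi, PP, Fintype.sum_sum_type, Sum.inr.injEq, Sum.inl.injEq, mul_ite, mul_one,
    mul_zero, mul_neg, reduceCtorEq, and_false, if_false, ite_zero_mul, zero_add, add_zero,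
    Finset.sum_const_zero]
  rcases eq_or_ne j k with hjk | hjk <;> rcases eq_or_ne k i with hki | hki <;>
    simp_all [Finset.sum_ite_eq, Finset.sum_ite_eq', eq_comm, ite_add_ite]

lemma SJ_lrr (i j k : Fin n) (z : TodaPt n) : SJ (Sum.inl i) (Sum.inr j) (Sum.inr k) z = 0 := by
  unfold SJ
  simp only [DPi, PP, Fintype.sum_sum_type, Sum.inr.injEq, Sum.inl.injEq, mul_ite, mul_one,
    mul_zero, mul_neg, reduceCtorEq, and_false, if_false, ite_zero_mul, zero_add, add_zero,
    mul_sub, sub_zero, zero_sub, Finset.sum_const_zero]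
  rcases eq_or_ne i k with rfl | hik <;> rcases eq_or_ne i j with rfl | hij <;>
    simp only [Finset.sum_sub_distrib, Finset.sum_add_distrib, sum_guard, sum_guard2,
      ite_self, sub_zero, zero_sub, add_zero, zero_add, sub_self, Finset.sum_const_zero] <;>
    split_ifs <;>
    first
      | (exfalso; fin_omega)
      | ring1
      | ring_nf

lemma SJ_rrr (i j k : Fin n) (z : TodaPt n) : SJ (Sum.inr i) (Sum.inr j) (Sum.inr k) z = 0 := by
  unfold SJ
  simp only [DPi, PP, Fintype.sum_sum_type, Sum.inr.injEq, Sum.inl.injEq, mul_ite, mul_one,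
    mul_zero, mul_neg, reduceCtorEq, and_false, if_false, ite_zero_mul, zero_add, add_zero,
    mul_sub, sub_zero, zero_sub, Finset.sum_const_zero]
  rcases eq_or_ne j k with rfl | hjk <;> rcases eq_or_ne i j with rfl | hij <;>
    [skip; skip; skip; rcases eq_or_ne i k with rfl | hik]
  all_goals
    simp only [Finset.sum_sub_distrib, Finset.sum_add_distrib, sum_guard, sum_guard2,
      ite_self, sub_zero, zero_sub, add_zero, zero_add, sub_self, Finset.sum_const_zero]
  all_goals split_ifs <;>
    first
      | (exfalso; fin_omega)
      | ring1
      | ring_nf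

lemma schouten (a b c : Idx n) (z : TodaPt n) : SJ a b c z = 0 := by
  rcases a with i | i <;> rcases b with j | j <;> rcases c with k | k
  · exact SJ_lll i j k z
  · exact SJ_llr i j k z
  · rw [SJ_cyc, SJ_cyc]; exact SJ_llr k i j z
  · exact SJ_lrr i j k z
  · rw [SJ_cyc]; exact SJ_llr j k i z
  · rw [SJ_cyc]; exact SJ_lrr j k i z
  · rw [SJ_cyc, SJ_cyc]; exact SJ_lrr k i j z
  · exact SJ_rrr i j k z

/-! ### The bracket in bivector form -/

noncomputable def Pb (f g : TodaPt n → ℝ) (z : TodaPt n) : ℝ :=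
  ∑ a : Idx n, ∑ b : Idx n, PP a b z * D f a z * D g b z

lemma todaBr1_eq (f g : TodaPt n → ℝ) (z : TodaPt n) : todaBr1 f g z = Pb f g z := by
  unfold todaBr1 Pb
  simp only [Fintype.sum_sum_type, PP, D_inl, D_inr]
  rw [Finset.sum_add_distrib, Finset.sum_add_distrib]
  have Hqq : (∑ i : Fin n, ∑ j : Fin n,
      (if i < j then (-1:ℝ) else if j < i then 1 else 0) * dq f i z * dq g j z)
      = ∑ i : Fin n, ∑ j : Fin n, if i < j then
        (-1 : ℝ) * (dq f i z * dq g j z - dq g i z * dq f j z) else 0 := by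
    have point : ∀ i j : Fin n,
        (if i < j then (-1:ℝ) else if j < i then 1 else 0) * dq f i z * dq g j z
        = (if i < j then -(dq f i z * dq g j z) else 0)
          + (if j < i then dq f i z * dq g j z else 0) := by
      intro i j
      split_ifs <;> first | (exact absurd ‹j < i› (lt_asymm ‹i < j›)) | ring
    rw [Finset.sum_congr rfl fun i _ => Finset.sum_congr rfl fun j _ => point i j]
    rw [Finset.sum_congr rfl fun (i : Fin n) (_ : i ∈ Finset.univ) =>
      (Finset.sum_add_distrib (s := Finset.univ)
        (f := fun j => if i < j then -(dq f i z * dq g j z) else 0)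
        (g := fun j => if j < i then dq f i z * dq g j z else 0)),
      Finset.sum_add_distrib]
    rw [show (∑ i : Fin n, ∑ j : Fin n, if j < i then dq f i z * dq g j z else 0)
        = ∑ j : Fin n, ∑ i : Fin n, if j < i then dq f i z * dq g j z else 0 from
      Finset.sum_comm]
    rw [← Finset.sum_add_distrib]
    refine Finset.sum_congr rfl fun i _ => ?_
    rw [← Finset.sum_add_distrib]
    refine Finset.sum_congr rfl fun j _ => ?_
    by_cases h : i < j <;> simp [h] <;> ring
  have Hqp : ((∑ i : Fin n, ∑ j : Fin n,
        (if i = j then z.2 i else 0) * dq f i z * dp g j z)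
      + ∑ i : Fin n, ∑ j : Fin n,
        (if i = j then -z.2 i else 0) * dp f i z * dq g j z)
      = ∑ i : Fin n, z.2 i * (dq f i z * dp g i z - dq g i z * dp f i z) := by
    rw [← Finset.sum_add_distrib]
    refine Finset.sum_congr rfl fun i _ => ?_
    simp only [ite_mul, zero_mul, neg_mul, Finset.sum_ite_eq, Finset.mem_univ, if_true]
    ring
  have Hpp : (∑ i : Fin n, ∑ j : Fin n,
        ((if (i:ℕ) = (j:ℕ)+1 then Real.exp (z.1 j - z.1 i) else 0)
          - (if (j:ℕ) = (i:ℕ)+1 then Real.exp (z.1 i - z.1 j) else 0))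
          * dp f i z * dp g j z)
      = ∑ i : Fin n, ∑ j : Fin n, if (j : ℕ) = (i : ℕ) + 1 then
        Real.exp (z.1 i - z.1 j) * (dp f j z * dp g i z - dp g j z * dp f i z) else 0 := by
    have point : ∀ i j : Fin n,
        ((if (i:ℕ) = (j:ℕ)+1 then Real.exp (z.1 j - z.1 i) else 0)
          - (if (j:ℕ) = (i:ℕ)+1 then Real.exp (z.1 i - z.1 j) else 0))
          * dp f i z * dp g j z
        = (if (i:ℕ) = (j:ℕ)+1 then Real.exp (z.1 j - z.1 i) * dp f i z * dp g j z else 0)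
          - (if (j:ℕ) = (i:ℕ)+1 then Real.exp (z.1 i - z.1 j) * dp f i z * dp g j z else 0) := by
      intro i j; split_ifs <;> ring
    rw [Finset.sum_congr rfl fun i _ => Finset.sum_congr rfl fun j _ => point i j]
    rw [Finset.sum_congr rfl fun (i : Fin n) (_ : i ∈ Finset.univ) =>
      (Finset.sum_sub_distrib (s := Finset.univ)
        (f := fun j : Fin n => if (i:ℕ) = (j:ℕ)+1 then
          Real.exp (z.1 j - z.1 i) * dp f i z * dp g j z else 0)
        (g := fun j : Fin n => if (j:ℕ) = (i:ℕ)+1 then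
          Real.exp (z.1 i - z.1 j) * dp f i z * dp g j z else 0)),
      Finset.sum_sub_distrib]
    rw [show (∑ i : Fin n, ∑ j : Fin n,
        if (i:ℕ) = (j:ℕ)+1 then Real.exp (z.1 j - z.1 i) * dp f i z * dp g j z else 0)
        = ∑ j : Fin n, ∑ i : Fin n,
        if (i:ℕ) = (j:ℕ)+1 then Real.exp (z.1 j - z.1 i) * dp f i z * dp g j z else 0 from
      Finset.sum_comm]
    rw [← Finset.sum_sub_distrib]
    refine Finset.sum_congr rfl fun i _ => ?_
    rw [← Finset.sum_sub_distrib]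
    refine Finset.sum_congr rfl fun j _ => ?_
    by_cases hji : (j:ℕ) = (i:ℕ)+1 <;> simp [hji] <;> ring
  linarith

lemma D_mul3 {u v w : TodaPt n → ℝ} {z : TodaPt n} (hu : DifferentiableAt ℝ u z)
    (hv : DifferentiableAt ℝ v z) (hw : DifferentiableAt ℝ w z) (a : Idx n) :
    D (fun y => u y * v y * w y) a z
      = D u a z * v z * w z + u z * D v a z * w z + u z * v z * D w a z := by
  rw [D_mul (u := fun y => u y * v y) (hu.mul hv) hw a, D_mul hu hv a]; ring

lemma D_Pb {f g : TodaPt n → ℝ} (hf : ContDiff ℝ (⊤ : ℕ∞) f) (hg : ContDiff ℝ (⊤ : ℕ∞) g)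
    (c : Idx n) (z : TodaPt n) :
    D (Pb f g) c z = ∑ a : Idx n, ∑ b : Idx n,
      (D (PP a b) c z * D f a z * D g b z
        + PP a b z * D (D f a) c z * D g b z
        + PP a b z * D f a z * D (D g b) c z) := by
  have hterm : ∀ a b : Idx n, ContDiff ℝ (⊤ : ℕ∞) (fun y => PP a b y * D f a y * D g b y) :=
    fun a b => ((contDiff_PP a b).mul (contDiff_D hf a)).mul (contDiff_D hg b)
  have hrow : ∀ a : Idx n, ContDiff ℝ (⊤ : ℕ∞)
      (fun y => ∑ b : Idx n, PP a b y * D f a y * D g b y) :=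
    fun a => ContDiff.sum fun b _ => hterm a b
  unfold Pb
  rw [D_sum Finset.univ (fun a y => ∑ b : Idx n, PP a b y * D f a y * D g b y)
    (fun a _ => ((hrow a).differentiable (by simp)).differentiableAt) c]
  refine Finset.sum_congr rfl fun a _ => ?_
  rw [D_sum Finset.univ (fun b y => PP a b y * D f a y * D g b y)
    (fun b _ => ((hterm a b).differentiable (by simp)).differentiableAt) c]
  refine Finset.sum_congr rfl fun b _ => ?_
  exact D_mul3 (((contDiff_PP a b).differentiable (by simp)).differentiableAt)
    (((contDiff_D hf a).differentiable (by simp)).differentiableAt)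
    (((contDiff_D hg b).differentiable (by simp)).differentiableAt) c

lemma Pb_Pb {f g : TodaPt n → ℝ} (hf : ContDiff ℝ (⊤ : ℕ∞) f) (hg : ContDiff ℝ (⊤ : ℕ∞) g)
    (h : TodaPt n → ℝ) (z : TodaPt n) :
    Pb (Pb f g) h z = ∑ c : Idx n, ∑ d : Idx n, PP c d z *
      (∑ a : Idx n, ∑ b : Idx n, (D (PP a b) c z * D f a z * D g b z
        + PP a b z * D (D f a) c z * D g b z + PP a b z * D f a z * D (D g b) c z))
      * D h d z := by
  have expand0 : Pb (Pb f g) h z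
      = ∑ c : Idx n, ∑ d : Idx n, PP c d z * D (Pb f g) c z * D h d z := rfl
  rw [expand0]
  exact Finset.sum_congr rfl fun c _ => Finset.sum_congr rfl fun d _ => by
    rw [D_Pb hf hg c z]

end Toda

/-- The second Toda bracket satisfies the Jacobi identity, i.e. it is a Poisson
bracket. -/
theorem todaBr1_jacobi {n : ℕ} (f g h : TodaPt n → ℝ)
    (hf : ContDiff ℝ (⊤ : ℕ∞) f) (hg : ContDiff ℝ (⊤ : ℕ∞) g) (hh : ContDiff ℝ (⊤ : ℕ∞) h) :
    ∀ z : TodaPt n,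
      todaBr1 (todaBr1 f g) h z + todaBr1 (todaBr1 g h) f z
        + todaBr1 (todaBr1 h f) g z = 0 := by
  intro z
  rw [funext (todaBr1_eq f g), funext (todaBr1_eq g h), funext (todaBr1_eq h f)]
  rw [todaBr1_eq (Pb f g) h z, todaBr1_eq (Pb g h) f z, todaBr1_eq (Pb h f) g z]
  rw [Pb_Pb hf hg h z, Pb_Pb hg hh f z, Pb_Pb hh hf g z]
  exact key (fun a b => PP a b z) (fun a b c => D (PP a b) c z)
    (fun a => D f a z) (fun a => D g a z) (fun a => D h a z)
    (fun a c => D (D f a) c z) (fun a c => D (D g a) c z) (fun a c => D (D h a) c z)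
    (fun a b => PP_antisymm a b z)
    (fun a b => D_D_symm hf a b z)
    (fun a b => D_D_symm hg a b z)
    (fun a b => D_D_symm hh a b z)
    (fun a b c => by simp only [D_PP]; exact schouten a b c z)
end
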